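/- arXiv:1305.3735 — 2 statements merged into one kernel-verified Lean document; each statement's English description precedes it below -/
import Mathlib

section
/- Let G be a graph, S a 2-club in G (i.e., the induced subgraph G[S] has diameter at most 2), and let u, v be twins in G (i.e., N(u)\{v} = N(v)\{u}). If u ∈ S and |S| > 1, then S ∪ {v} is also a 2-club in G. -/
def IsSClub {V : Type*} (G : SimpleGraph V) (s : ℕ) (S : Set V) : Prop :=
  ∀ u v : S, ∃ p : (G.induce S).Walk u v, p.length ≤ s

/-!
A neighbour of `u` other than `v` is a neighbour of `v`, so a path of length at most 2 in `G[S]`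
from `x` to `u` becomes one from `x` to `v` by replacing its last vertex. For `x = u` itself, use
a neighbour of `u` in `S`, which exists because `S` has another vertex.
-/

open SimpleGraph

/-- For `a, b ∈ S`: `a` and `b` are at distance at most `2` in `G[S]`. -/
def WithinTwoIn {V : Type*} (G : SimpleGraph V) (S : Set V) (a b : V) : Prop :=
  a = b ∨ G.Adj a b ∨ ∃ z ∈ S, G.Adj a z ∧ G.Adj z b

section WithinTwoIn

variable {V : Type*} {G : SimpleGraph V} {S T : Set V} {a b : V}

theorem WithinTwoIn.symm (h : WithinTwoIn G S a b) : WithinTwoIn G S b a := by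
  rcases h with rfl | hab | ⟨z, hz, haz, hzb⟩
  · exact Or.inl rfl
  · exact Or.inr (Or.inl hab.symm)
  · exact Or.inr (Or.inr ⟨z, hz, hzb.symm, haz.symm⟩)

theorem WithinTwoIn.mono (hST : S ⊆ T) (h : WithinTwoIn G S a b) : WithinTwoIn G T a b := by
  rcases h with rfl | hab | ⟨z, hz, haz, hzb⟩
  · exact Or.inl rfl
  · exact Or.inr (Or.inl hab)
  · exact Or.inr (Or.inr ⟨z, hST hz, haz, hzb⟩)

end WithinTwoIn

theorem SimpleGraph.exists_walk_length_le_two_iff {W : Type*} {H : SimpleGraph W} {a b : W} :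
    (∃ p : H.Walk a b, p.length ≤ 2) ↔ a = b ∨ H.Adj a b ∨ ∃ z, H.Adj a z ∧ H.Adj z b := by
  constructor
  · rintro ⟨p, hp⟩
    match p, hp with
    | .nil, _ => exact Or.inl rfl
    | .cons h .nil, _ => exact Or.inr (Or.inl h)
    | .cons h (.cons h' .nil), _ => exact Or.inr (Or.inr ⟨_, h, h'⟩)
    | .cons _ (.cons _ (.cons _ _)), hp => simp at hp
  · rintro (rfl | h | ⟨z, h₁, h₂⟩)
    · exact ⟨.nil, by simp⟩
    · exact ⟨.cons h .nil, by simp⟩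
    · exact ⟨.cons h₁ (.cons h₂ .nil), by simp⟩

theorem isSClub_two_iff {V : Type*} {G : SimpleGraph V} {S : Set V} :
    IsSClub G 2 S ↔ ∀ a ∈ S, ∀ b ∈ S, WithinTwoIn G S a b := by
  simp only [IsSClub, exists_walk_length_le_two_iff, WithinTwoIn, Subtype.forall,
    Subtype.ext_iff, comap_adj, Function.Embedding.coe_subtype, Subtype.exists, exists_prop]

theorem IsSClub.exists_adj {V : Type*} {G : SimpleGraph V} {s : ℕ} {S : Set V}
    (hS : IsSClub G s S) (hcard : 1 < S.ncard) {u : V} (hu : u ∈ S) :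
    ∃ z ∈ S, G.Adj u z := by
  obtain ⟨w, hw, hwu⟩ := Set.exists_ne_of_one_lt_ncard hcard u
  obtain ⟨p, -⟩ := hS ⟨u, hu⟩ ⟨w, hw⟩
  have hp : ¬p.Nil := Walk.not_nil_of_ne fun h => hwu (congrArg Subtype.val h).symm
  exact ⟨p.snd, p.snd.2, p.adj_snd hp⟩

theorem isSClub_two_insert {V : Type*} {G : SimpleGraph V} {S : Set V} {v : V}
    (hS : IsSClub G 2 S) (hv : ∀ x ∈ S, WithinTwoIn G S x v) :
    IsSClub G 2 (insert v S) := by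
  have hsub : S ⊆ insert v S := Set.subset_insert v S
  rw [isSClub_two_iff] at hS ⊢
  rintro a (rfl | ha) b (rfl | hb)
  · exact Or.inl rfl
  · exact ((hv b hb).symm).mono hsub
  · exact (hv a ha).mono hsub
  · exact (hS a ha b hb).mono hsub

theorem adj_of_neighborSet_sdiff_eq {V : Type*} {G : SimpleGraph V} {u v y : V}
    (htwin : G.neighborSet u \ {v} = G.neighborSet v \ {u}) (hyu : G.Adj y u) (hyv : y ≠ v) :
    G.Adj y v := by
  have hy : y ∈ G.neighborSet u \ {v} := ⟨hyu.symm, hyv⟩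
  rw [htwin] at hy
  exact hy.1.symm

theorem withinTwoIn_twin {V : Type*} {G : SimpleGraph V} {S : Set V} {u v : V}
    (hS : IsSClub G 2 S) (htwin : G.neighborSet u \ {v} = G.neighborSet v \ {u})
    (hu : u ∈ S) (hcard : 1 < S.ncard) (hv : v ∉ S) :
    ∀ x ∈ S, WithinTwoIn G S x v := by
  have hne : ∀ y ∈ S, y ≠ v := fun y hy h => hv (h ▸ hy)
  intro x hx
  by_cases hxu : x = u
  · subst hxu
    obtain ⟨z, hz, hxz⟩ := hS.exists_adj hcard hx
    exact Or.inr (Or.inr ⟨z, hz, hxz, adj_of_neighborSet_sdiff_eq htwin hxz.symm (hne z hz)⟩)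
  · rcases isSClub_two_iff.mp hS x hx u hu with h | hxu' | ⟨z, hz, hxz, hzu⟩
    · exact absurd h hxu
    · exact Or.inr (Or.inl (adj_of_neighborSet_sdiff_eq htwin hxu' (hne x hx)))
    · exact Or.inr (Or.inr ⟨z, hz, hxz, adj_of_neighborSet_sdiff_eq htwin hzu (hne z hz)⟩)

theorem stmt_0_general {V : Type*} (G : SimpleGraph V)
    (S : Set V) (u v : V)
    (hS : IsSClub G 2 S)
    (htwin : G.neighborSet u \ {v} = G.neighborSet v \ {u})
    (hu : u ∈ S) (hcard : 1 < S.ncard) :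
    IsSClub G 2 (S ∪ {v}) := by
  by_cases hv : v ∈ S
  · rwa [Set.union_singleton, Set.insert_eq_of_mem hv]
  · rw [Set.union_singleton]
    exact isSClub_two_insert hS (withinTwoIn_twin hS htwin hu hcard hv)

theorem stmt_0 {V : Type*} [Fintype V] [DecidableEq V] (G : SimpleGraph V)
    (S : Set V) (u v : V)
    (hS : IsSClub G 2 S)
    (htwin : G.neighborSet u \ {v} = G.neighborSet v \ {u})
    (hu : u ∈ S) (hcard : 1 < S.ncard) :
    IsSClub G 2 (S ∪ {v}) :=
  stmt_0_general G S u v hS htwin hu hcard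
end

section
/- For every graph G, the degeneracy of G is at most the h-index of G. -/
theorem stmt_9 {V : Type*} [Fintype V] [DecidableEq V] (G : SimpleGraph V)
    [DecidableRel G.Adj] (k : ℕ)
    (hk : k ≤ (Finset.univ.filter fun v => k ≤ G.degree v).card)
    (hkmax : ∀ j : ℕ, k < j → (Finset.univ.filter fun v => j ≤ G.degree v).card < j) :
    ∀ A : Finset V, A.Nonempty → ∃ v ∈ A, (A.filter (G.Adj v)).card ≤ k := by
  intro A hA
  by_contra h
  push_neg at h
  have hsub : A ⊆ Finset.univ.filter fun v => k + 1 ≤ G.degree v := by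
    intro v hv
    simp only [Finset.mem_filter, Finset.mem_univ, true_and]
    calc k + 1 ≤ (A.filter (G.Adj v)).card := h v hv
      _ ≤ (G.neighborFinset v).card := by
          apply Finset.card_le_card
          intro w hw
          simp only [Finset.mem_filter] at hw
          simpa using hw.2
      _ = G.degree v := G.card_neighborFinset_eq_degree v
  have hAk : A.card ≤ k := by
    have := hkmax (k + 1) (Nat.lt_succ_self k)
    have := Finset.card_le_card hsub
    omega
  obtain ⟨v, hv⟩ := hA
  have := h v hv
  have : (A.filter (G.Adj v)).card ≤ A.card := Finset.card_filter_le _ _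
  omega
end
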